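/- arXiv:1004.2117 — 2 statements merged into one kernel-verified Lean document; each statement's English description precedes it below -/
import Mathlib

section
/- For all integers l, m, n ≥ 0, β_{l,m+n} = β_{l,m} · β_{l,n}^{↑m} in B_∞. -/
/-!
Induct on `l`. Peeling off the first row gives `β_{l+1,s} = (σ_{l+1} ⋯ σ_{l+s}) β_{l,s}`.
For `s = m + n` the row splits as `(σ_{l+1} ⋯ σ_{l+m}) (σ_{l+m+1} ⋯ σ_{l+m+n})`, and the second
half commutes past `β_{l,m}`, whose letters are among `σ_1, …, σ_{l+m-1}`; it is then exactly the
shifted first row of `β_{l+1,n}`.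
-/

namespace BraidPaper

/-- Relations of the infinite Artin braid group `B_∞`.  The generator with index `n : ℕ`
represents the Artin generator `σ_{n+1}` (so generators are `σ_1, σ_2, …`). -/
def BraidRels : Set (FreeGroup ℕ) :=
  {r | (∃ i : ℕ, r = .of i * .of (i + 1) * .of i * (.of (i + 1) * .of i * .of (i + 1))⁻¹) ∨
       (∃ i j : ℕ, i + 2 ≤ j ∧ r = .of i * .of j * (.of j * .of i)⁻¹)}

/-- The infinite Artin braid group `B_∞`, presented by generators `σ_1, σ_2, …` and the
braid and far-commutativity relations. -/
abbrev BInf : Type := PresentedGroup BraidRels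

/-- The Artin generator `σ i` of `B_∞` (meaningful for `i ≥ 1`). -/
def σ (i : ℕ) : BInf := PresentedGroup.of (i - 1)

lemma rel_eq_one {r : FreeGroup ℕ} (hr : r ∈ BraidRels) : PresentedGroup.mk BraidRels r = 1 := by
  have : r ∈ Subgroup.normalClosure BraidRels := Subgroup.subset_normalClosure hr
  exact (QuotientGroup.eq_one_iff r).mpr this

lemma gen_braid (i : ℕ) :
    (PresentedGroup.of i : BInf) * .of (i + 1) * .of i = .of (i + 1) * .of i * .of (i + 1) := by
  have h := rel_eq_one (Or.inl ⟨i, rfl⟩)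
  rw [map_mul, map_mul, map_mul, map_inv, map_mul, map_mul, mul_inv_eq_one] at h
  exact h

lemma gen_comm {i j : ℕ} (hij : i + 2 ≤ j) :
    (PresentedGroup.of i : BInf) * .of j = .of j * .of i := by
  have h := rel_eq_one (Or.inr ⟨i, j, hij, rfl⟩)
  rw [map_mul, map_mul, map_inv, map_mul, mul_inv_eq_one] at h
  exact h

/-- The shift endomorphism `↑ℓ : B_∞ → B_∞`, `σ_i ↦ σ_{i+ℓ}`. -/
def shift (l : ℕ) : BInf →* BInf :=
  PresentedGroup.toGroup (f := fun n => (PresentedGroup.of (n + l) : BInf)) (by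
    rintro r (⟨i, rfl⟩ | ⟨i, j, hij, rfl⟩) <;>
      simp only [map_mul, map_inv, FreeGroup.lift_apply_of, mul_inv_eq_one]
    · have h1 : i + 1 + l = i + l + 1 := by omega
      rw [h1]; exact gen_braid (i + l)
    · exact gen_comm (by omega : (i + l) + 2 ≤ j + l))

/-- The ascending product `σ_i σ_{i+1} ⋯ σ_{i+l-1}` (of `l` factors). -/
def asc (i l : ℕ) : BInf := ((List.range l).map fun t => σ (i + t)).prod

/-- The descending product `σ_i σ_{i-1} ⋯ σ_{i-k+1}` (of `k` factors). -/
def desc (i k : ℕ) : BInf := ((List.range k).map fun t => σ (i - t)).prod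

/-- The block transposition braid
`β_{k,l} = (σ_k σ_{k+1} ⋯ σ_{k+l-1})(σ_{k-1} σ_k ⋯ σ_{k+l-2}) ⋯ (σ_1 σ_2 ⋯ σ_l)`,
with `β_{k,0} = β_{0,l} = 1`. -/
def β (k l : ℕ) : BInf := ((List.range k).map fun r => asc (k - r) l).prod

/-- The positive (Garside) lift `ω_a = β_{1,1} β_{2,1} ⋯ β_{a-1,1}` of the longest element of
the symmetric group `S_a`, with `ω_0 = ω_1 = 1`. -/
def ω (a : ℕ) : BInf := ((List.range (a - 1)).map fun t => β (t + 1) 1).prod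

/-- The copy of the braid group `B_n` inside `B_∞`: the subgroup generated by
`σ_1, …, σ_{n-1}`. -/
def BSub (n : ℕ) : Subgroup BInf := Subgroup.closure {g | ∃ i, 1 ≤ i ∧ i < n ∧ g = σ i}

lemma shift_sigma (m : ℕ) {i : ℕ} (hi : 1 ≤ i) : shift m (σ i) = σ (i + m) := by
  simp only [σ, shift, PresentedGroup.toGroup.of]
  congr 1
  omega

lemma sigma_commute {i j : ℕ} (hi : 1 ≤ i) (hij : i + 2 ≤ j) : Commute (σ i) (σ j) :=
  gen_comm (by omega)

lemma asc_add (i m n : ℕ) : asc i (m + n) = asc i m * asc (i + m) n := by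
  simp only [asc, List.range_add, List.map_append, List.map_map, List.prod_append,
    Function.comp_def, Nat.add_assoc]

lemma shift_asc (m : ℕ) {i : ℕ} (hi : 1 ≤ i) (n : ℕ) : shift m (asc i n) = asc (i + m) n := by
  simp only [asc, map_list_prod, List.map_map, Function.comp_def]
  congr 1
  refine List.map_congr_left fun t _ => ?_
  rw [shift_sigma m (by omega), Nat.add_right_comm]

lemma beta_succ (k s : ℕ) : β (k + 1) s = asc (k + 1) s * β k s := by
  simp only [β, List.range_succ_eq_map, List.map_cons, List.prod_cons, List.map_map,
    Function.comp_def, Nat.sub_zero, Nat.succ_sub_succ]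

lemma commute_asc_asc {a b : ℕ} (s : ℕ) {s' : ℕ} (hb : 1 ≤ b) (h : b + s' + 1 ≤ a) :
    Commute (asc a s) (asc b s') := by
  refine Commute.list_prod_left _ _ fun x hx => Commute.list_prod_right _ _ fun y hy => ?_
  obtain ⟨t, -, rfl⟩ := List.mem_map.mp hx
  obtain ⟨t', ht', rfl⟩ := List.mem_map.mp hy
  exact (sigma_commute (by omega) (by rw [List.mem_range] at ht'; omega)).symm

lemma commute_asc_beta {a : ℕ} (s : ℕ) {l m : ℕ} (h : l + m + 1 ≤ a) :
    Commute (asc a s) (β l m) := by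
  refine Commute.list_prod_right _ _ fun x hx => ?_
  obtain ⟨r, hr, rfl⟩ := List.mem_map.mp hx
  simp only [List.mem_range] at hr
  exact commute_asc_asc s (by omega) (by omega)

/-- `β_{l,m+n} = β_{l,m} · β_{l,n}^{↑m}` in `B_∞`. -/
theorem beta_add_right (l m n : ℕ) : β l (m + n) = β l m * shift m (β l n) := by
  induction l with
  | zero => simp [β]
  | succ l ih =>
    calc β (l + 1) (m + n)
        = asc (l + 1) m * (asc (l + 1 + m) n * β l m) * shift m (β l n) := by
          rw [beta_succ, asc_add, ih]; group
      _ = asc (l + 1) m * β l m * (asc (l + 1 + m) n * shift m (β l n)) := by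
          rw [(commute_asc_beta n (by omega)).eq]; group
      _ = β (l + 1) m * shift m (β (l + 1) n) := by
          rw [beta_succ, beta_succ, map_mul, shift_asc m (by omega)]

end BraidPaper
end

section
/- The braid shuffle elements Ш_{m,n} (defined by the recursion Ш_{m,n} = Ш_{m−1,n} + Ш_{m,n−1} β_{m,1}^{↑(n−1)} with initial condition Ш_{n,−n} = δ_{n,0}) also satisfy the second Pascal-type recursion Ш_{m,n} = Ш_{m,n−1}^{↑1} + Ш_{m−1,n}^{↑1} β_{1,n} for all integers m, n with m + n ≥ 1; that is, the two Pascal-type recurrences produce the same family of shuffle elements. -/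
/-!
Induction on `m + n`. For `m, n ≥ 1`, expand `Ш_{m,n}` by the first recursion and the two resulting
terms by the second one; expanding the right-hand side instead by the shifted first recursion gives
the same four terms, one of them only after the braid identity
`β_{1,n-1} β_{m,1}^{↑(n-1)} = β_{m-1,1}^{↑n} β_{1,n}`. That identity holds because
`β_{m,1}^{↑(n-1)} = β_{m-1,1}^{↑n} σ_n` and `β_{m-1,1}^{↑n}` involves only `σ_{n+1}, σ_{n+2}, …`,
which commute with `β_{1,n-1} = σ_1 ⋯ σ_{n-1}`.
-/

namespace BraidPaper

variable (𝕜 : Type) [CommRing 𝕜]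

/-- The canonical embedding of `B_∞` into its group algebra `𝕜B_∞`. -/
noncomputable def ι (g : BInf) : MonoidAlgebra 𝕜 BInf := MonoidAlgebra.of 𝕜 BInf g

/-- The shift `↑ℓ` extended (as an algebra homomorphism) to the group algebra `𝕜B_∞`. -/
noncomputable def shiftA (l : ℕ) : MonoidAlgebra 𝕜 BInf →ₐ[𝕜] MonoidAlgebra 𝕜 BInf :=
  MonoidAlgebra.mapDomainAlgHom 𝕜 𝕜 (shift l)

/-- The braid shuffle elements `Ш_{m,n} ∈ 𝕜B_∞` (for natural `m, n`), determined by
`Ш_{0,n} = Ш_{m,0} = 1` and the Pascal-type recursion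
`Ш_{m,n} = Ш_{m-1,n} + Ш_{m,n-1} β_{m,1}^{↑(n-1)}`. -/
noncomputable def Sh : ℕ → ℕ → MonoidAlgebra 𝕜 BInf
  | 0, _ => 1
  | _ + 1, 0 => 1
  | m + 1, n + 1 => Sh m (n + 1) + Sh (m + 1) n * ι 𝕜 (shift n (β (m + 1) 1))
  termination_by m n => (m, n)

/-- The braid shuffle elements `Ш_{m,n} ∈ 𝕜B_∞` for integer indices: `Ш_{m,n} = 0` whenever
`m < 0` or `n < 0`. -/
noncomputable def ShZ (m n : ℤ) : MonoidAlgebra 𝕜 BInf :=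
  if 0 ≤ m ∧ 0 ≤ n then Sh 𝕜 m.toNat n.toNat else 0

/-- The braid Pochhammer symbol
`P_{k,n}(x,y) = (x - β_{k,1} y)(x - β_{k+1,1} y) ⋯ (x - β_{k+n-1,1} y) ∈ 𝕜B_∞`. -/
noncomputable def Poch (k n : ℕ) (x y : 𝕜) : MonoidAlgebra 𝕜 BInf :=
  ((List.range n).map fun t =>
    algebraMap 𝕜 (MonoidAlgebra 𝕜 BInf) x - algebraMap 𝕜 (MonoidAlgebra 𝕜 BInf) y * ι 𝕜 (β (k + t) 1)).prod

lemma shift_of (l n : ℕ) : shift l (PresentedGroup.of n) = PresentedGroup.of (n + l) :=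
  PresentedGroup.toGroup.of _

lemma shift_σ (l : ℕ) {i : ℕ} (hi : 0 < i) : shift l (σ i) = σ (i + l) := by
  rw [σ, σ, shift_of]
  congr 1
  omega

lemma shift_comp (a b : ℕ) : (shift a).comp (shift b) = shift (a + b) :=
  PresentedGroup.ext fun x => by simp only [MonoidHom.comp_apply, shift_of, add_assoc, add_comm b]

lemma shift_shift (a b : ℕ) (g : BInf) : shift a (shift b g) = shift (a + b) g :=
  DFunLike.congr_fun (shift_comp a b) g

lemma commute_σ_shift {i l : ℕ} (hi : 0 < i) (hil : i < l) (g : BInf) :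
    Commute (σ i) (shift l g) := by
  suffices g ∈ (Subgroup.centralizer {σ i}).comap (shift l) by
    simpa [Subgroup.mem_centralizer_singleton_iff, Commute, SemiconjBy, eq_comm] using this
  refine PresentedGroup.generated_by _ _ (fun j => ?_) g
  simp only [Subgroup.mem_comap, shift_of, Subgroup.mem_centralizer_singleton_iff, σ]
  exact (gen_comm (by omega)).symm

lemma asc_one_right (i : ℕ) : asc i 1 = σ i := by
  simp [asc]

lemma asc_succ (i l : ℕ) : asc i (l + 1) = asc i l * σ (i + l) := by
  simp [asc, List.range_succ]

lemma β_zero_left (l : ℕ) : β 0 l = 1 := by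
  simp [β]

lemma β_one_left (l : ℕ) : β 1 l = asc 1 l := by
  simp [β]

lemma β_one_zero : β 1 0 = 1 := by
  simp [β_one_left, asc]

lemma β_one_right (k : ℕ) : β k 1 = desc k k := by
  simp only [β, desc, asc_one_right]

lemma β_succ_one (c : ℕ) : β (c + 1) 1 = shift 1 (β c 1) * σ 1 := by
  simp only [β_one_right, desc, List.range_succ, List.map_append, List.prod_append, map_list_prod,
    List.map_map, List.map_singleton, List.prod_singleton, Nat.add_sub_cancel_left]
  congr 1
  refine congrArg List.prod (List.map_congr_left fun r hr => ?_)
  rw [List.mem_range] at hr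
  rw [Function.comp_apply, shift_σ _ (by omega)]
  congr 1
  omega

lemma β_one_mul_shift_β_succ (b c : ℕ) :
    β 1 b * shift b (β (c + 1) 1) = shift (b + 1) (β c 1) * β 1 (b + 1) := by
  have hcomm : Commute (asc 1 b) (shift (b + 1) (β c 1)) :=
    Commute.list_prod_left _ _ fun x hx => by
      obtain ⟨t, ht, rfl⟩ := List.mem_map.1 hx
      exact commute_σ_shift (by omega) (by simp at ht; omega) _
  rw [β_one_left, β_one_left, β_succ_one, map_mul, shift_shift, shift_σ _ one_pos, ← mul_assoc,
    hcomm.eq, asc_succ, mul_assoc, add_comm b 1, add_comm 1 b]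

lemma ι_one : ι 𝕜 1 = 1 := rfl

lemma ι_mul (g h : BInf) : ι 𝕜 (g * h) = ι 𝕜 g * ι 𝕜 h := map_mul (MonoidAlgebra.of 𝕜 BInf) g h

lemma shiftA_ι (l : ℕ) (g : BInf) : shiftA 𝕜 l (ι 𝕜 g) = ι 𝕜 (shift l g) := by
  simp [shiftA, ι, MonoidAlgebra.mapDomainAlgHom]

lemma Sh_zero_right (m : ℕ) : Sh 𝕜 m 0 = 1 := by
  cases m <;> rw [Sh]

lemma ShZ_natCast (a b : ℕ) : ShZ 𝕜 a b = Sh 𝕜 a b := by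
  simp [ShZ]

lemma ShZ_eq_zero {m n : ℤ} (h : m < 0 ∨ n < 0) : ShZ 𝕜 m n = 0 := by
  rw [ShZ, if_neg (by omega)]

lemma ShZ_zero_left {n : ℤ} (hn : 0 ≤ n) : ShZ 𝕜 0 n = 1 := by
  rw [ShZ, if_pos ⟨le_rfl, hn⟩, Int.toNat_zero, Sh]

lemma ShZ_zero_right {m : ℤ} (hm : 0 ≤ m) : ShZ 𝕜 m 0 = 1 := by
  rw [ShZ, if_pos ⟨hm, le_rfl⟩, Int.toNat_zero, Sh_zero_right]

lemma ShZ_eq_add {m n : ℤ} (h : 1 ≤ m + n) :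
    ShZ 𝕜 m n = ShZ 𝕜 (m - 1) n + ShZ 𝕜 m (n - 1) * ι 𝕜 (shift (n - 1).toNat (β m.toNat 1)) := by
  obtain hneg | rfl | rfl | ⟨hm, hn⟩ : (m < 0 ∨ n < 0) ∨ m = 0 ∨ n = 0 ∨ (0 < m ∧ 0 < n) := by
    omega
  · rw [ShZ_eq_zero 𝕜 hneg, ShZ_eq_zero 𝕜 (by omega), ShZ_eq_zero 𝕜 (n := n - 1) (by omega),
      zero_mul, add_zero]
  · rw [ShZ_zero_left 𝕜 (by omega), ShZ_zero_left 𝕜 (by omega), ShZ_eq_zero 𝕜 (by omega),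
      Int.toNat_zero, β_zero_left, map_one, ι_one, mul_one, zero_add]
  · rw [ShZ_zero_right 𝕜 (by omega), ShZ_zero_right 𝕜 (by omega), ShZ_eq_zero 𝕜 (by omega),
      zero_mul, add_zero]
  · obtain ⟨a, rfl⟩ : ∃ a : ℕ, m = a + 1 := ⟨(m - 1).toNat, by omega⟩
    obtain ⟨b, rfl⟩ : ∃ b : ℕ, n = b + 1 := ⟨(n - 1).toNat, by omega⟩
    simp only [add_sub_cancel_right]
    simp only [← Nat.cast_add_one, ShZ_natCast, Int.toNat_natCast]
    rw [Sh]

lemma shiftA_ShZ_eq_add {m n : ℤ} (h : 1 ≤ m + n) :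
    shiftA 𝕜 1 (ShZ 𝕜 m n) = shiftA 𝕜 1 (ShZ 𝕜 (m - 1) n) +
      shiftA 𝕜 1 (ShZ 𝕜 m (n - 1)) * ι 𝕜 (shift n.toNat (β m.toNat 1)) := by
  rw [ShZ_eq_add 𝕜 h, map_add, map_mul, shiftA_ι, shift_shift]
  rcases le_or_gt n 0 with hn | hn
  · -- the exponents `1 + (n - 1).toNat` and `n.toNat` differ at `n = 0`, where `Ш_{m,n-1} = 0`
    rw [ShZ_eq_zero 𝕜 (n := n - 1) (by omega), map_zero, zero_mul, zero_mul]
  · rw [show 1 + (n - 1).toNat = n.toNat by omega]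

def SecondRecursion (m n : ℤ) : Prop :=
  ShZ 𝕜 m n = shiftA 𝕜 1 (ShZ 𝕜 m (n - 1)) + shiftA 𝕜 1 (ShZ 𝕜 (m - 1) n) * ι 𝕜 (β 1 n.toNat)

lemma secondRecursion_of_nonpos {m n : ℤ} (h : 1 ≤ m + n) (hmn : m ≤ 0 ∨ n ≤ 0) :
    SecondRecursion 𝕜 m n := by
  unfold SecondRecursion
  obtain hneg | rfl | rfl : (m < 0 ∨ n < 0) ∨ m = 0 ∨ n = 0 := by omega
  · rw [ShZ_eq_zero 𝕜 hneg, ShZ_eq_zero 𝕜 (n := n - 1) (by omega),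
      ShZ_eq_zero 𝕜 (m := m - 1) (by omega), map_zero, zero_mul, add_zero]
  · rw [ShZ_zero_left 𝕜 (by omega), ShZ_zero_left 𝕜 (by omega), ShZ_eq_zero 𝕜 (by omega),
      map_one, map_zero, zero_mul, add_zero]
  · rw [ShZ_zero_right 𝕜 (by omega), ShZ_zero_right 𝕜 (by omega), ShZ_eq_zero 𝕜 (by omega),
      Int.toNat_zero, β_one_zero, map_one, map_zero, ι_one, mul_one, zero_add]

lemma secondRecursion_of_pos {m n : ℤ} (hm : 0 < m) (hn : 0 < n)
    (hleft : SecondRecursion 𝕜 (m - 1) n) (hright : SecondRecursion 𝕜 m (n - 1)) :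
    SecondRecursion 𝕜 m n := by
  unfold SecondRecursion at *
  obtain ⟨b, hb, hb'⟩ : ∃ b : ℕ, (n - 1).toNat = b ∧ n.toNat = b + 1 := ⟨_, rfl, by omega⟩
  obtain ⟨c, hc, hc'⟩ : ∃ c : ℕ, (m - 1).toNat = c ∧ m.toNat = c + 1 := ⟨_, rfl, by omega⟩
  have hbraid : ι 𝕜 (β 1 b) * ι 𝕜 (shift b (β (c + 1) 1)) =
      ι 𝕜 (shift (b + 1) (β c 1)) * ι 𝕜 (β 1 (b + 1)) := by
    rw [← ι_mul, ← ι_mul, β_one_mul_shift_β_succ]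
  rw [shiftA_ShZ_eq_add 𝕜 (m := m) (n := n - 1) (by omega),
    shiftA_ShZ_eq_add 𝕜 (m := m - 1) (n := n) (by omega), ShZ_eq_add 𝕜 (by omega), hleft, hright]
  simp only [hb, hb', hc, hc', add_mul, mul_assoc, hbraid]
  abel

/-- the shuffle elements also satisfy the second Pascal-type recursion
`Ш_{m,n} = Ш_{m,n-1}^{↑1} + Ш_{m-1,n}^{↑1} β_{1,n}` for all integers `m, n` with `m + n ≥ 1`. -/
theorem shuffle_second_recursion (m n : ℤ) (h : 1 ≤ m + n) :
    ShZ 𝕜 m n = shiftA 𝕜 1 (ShZ 𝕜 m (n - 1)) + shiftA 𝕜 1 (ShZ 𝕜 (m - 1) n) * ι 𝕜 (β 1 n.toNat) := by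
  induction hk : (m + n).toNat using Nat.strong_induction_on generalizing m n with
  | _ k ih =>
    by_cases hmn : m ≤ 0 ∨ n ≤ 0
    · exact secondRecursion_of_nonpos 𝕜 h hmn
    · push Not at hmn
      exact secondRecursion_of_pos 𝕜 hmn.1 hmn.2 (ih _ (by omega) _ _ (by omega) rfl)
        (ih _ (by omega) _ _ (by omega) rfl)

end BraidPaper
end
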